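/- arXiv:2210.15898 — 2 statements merged into one kernel-verified Lean document; each statement's English description precedes it below -/
import Mathlib

section
/- Let θ: ℝ → ℝ^d solve θ'(t) = -∇f(θ(t)) - λθ(t), where f is smooth and scale-invariant on coordinate subset A. Then r_A²(t) := ‖θ_A(t)‖² satisfies (d/dt) r_A²(t) = -2λ r_A²(t), and hence r_A²(t) = r_A²(0)·e^{-2λt}. -/
open RealInnerProductSpace

/-- Projection of `θ` onto the coordinates in `A` (other coordinates set to zero). -/
def projA {d : ℕ} (A : Finset (Fin d)) (θ : EuclideanSpace ℝ (Fin d)) :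
    EuclideanSpace ℝ (Fin d) :=
  WithLp.toLp 2 (fun i => if i ∈ A then θ i else 0)

/-- Projection of `θ` onto the coordinates outside `A`. -/
def projAc {d : ℕ} (A : Finset (Fin d)) (θ : EuclideanSpace ℝ (Fin d)) :
    EuclideanSpace ℝ (Fin d) :=
  WithLp.toLp 2 (fun i => if i ∈ A then 0 else θ i)

noncomputable def projACLM {d : ℕ} (A : Finset (Fin d)) :
    EuclideanSpace ℝ (Fin d) →L[ℝ] EuclideanSpace ℝ (Fin d) :=
  LinearMap.toContinuousLinearMap
    { toFun := projA A
      map_add' := by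
        intro x y; ext i; simp [projA]
        split <;> simp
      map_smul' := by
        intro c x; ext i
        by_cases h : i ∈ A <;> simp [projA, h] }

lemma projACLM_apply {d : ℕ} (A : Finset (Fin d)) (x : EuclideanSpace ℝ (Fin d)) :
    projACLM A x = projA A x := rfl

lemma projA_add_projAc {d : ℕ} (A : Finset (Fin d)) (x : EuclideanSpace ℝ (Fin d)) :
    projA A x + projAc A x = x := by
  ext i
  show projA A x i + projAc A x i = x i
  simp [projA, projAc]
  split <;> simp

lemma inner_projA {d : ℕ} (A : Finset (Fin d)) (x y : EuclideanSpace ℝ (Fin d)) :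
    ⟪projA A x, y⟫ = ⟪projA A x, projA A y⟫ := by
  simp only [PiLp.inner_apply, RCLike.inner_apply, starRingEnd_apply, star_trivial]
  refine Finset.sum_congr rfl fun i _ => ?_
  simp [projA]
  intro h1 h2; exact absurd h2 h1

lemma inner_projA_self {d : ℕ} (A : Finset (Fin d)) (x : EuclideanSpace ℝ (Fin d)) :
    ⟪projA A x, x⟫ = ‖projA A x‖ ^ 2 := by
  rw [inner_projA, real_inner_self_eq_norm_sq]

lemma grad_orth {d : ℕ}
    (f : EuclideanSpace ℝ (Fin d) → ℝ) (hf : ContDiff ℝ (⊤ : ℕ∞) f)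
    (A : Finset (Fin d))
    (hinv : ∀ α : ℝ, 0 < α → ∀ θ, f (α • projA A θ + projAc A θ) = f θ)
    (x : EuclideanSpace ℝ (Fin d)) :
    ⟪projA A x, gradient f x⟫ = 0 := by
  set c : ℝ → EuclideanSpace ℝ (Fin d) := fun α => α • projA A x + projAc A x with hc
  have hc1 : c 1 = x := by simp [hc, projA_add_projAc]
  have hderiv : HasDerivAt c (projA A x) 1 := by
    exact (((hasDerivAt_id (1:ℝ)).smul_const (projA A x)).add_const (projAc A x)).congr_deriv (one_smul _ _)
  have hfd : HasFDerivAt f (fderiv ℝ f x) x :=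
    (hf.differentiable (by simp) x).hasFDerivAt
  have hcomp : HasDerivAt (f ∘ c) (fderiv ℝ f x (projA A x)) 1 := by
    have hfd' : HasFDerivAt f (fderiv ℝ f x) (c 1) := hc1.symm ▸ hfd
    simpa [Function.comp] using hfd'.comp_hasDerivAt 1 hderiv
  have heq : (f ∘ c) =ᶠ[nhds (1:ℝ)] fun _ => f x := by
    filter_upwards [isOpen_Ioi.mem_nhds (by norm_num : (1:ℝ) ∈ Set.Ioi 0)] with α hα
    exact hinv α hα x
  have hzero : HasDerivAt (f ∘ c) 0 1 :=
    (hasDerivAt_const 1 (f x)).congr_of_eventuallyEq heq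
  have : fderiv ℝ f x (projA A x) = 0 := hcomp.unique hzero
  rw [real_inner_comm]
  rw [show gradient f x = (InnerProductSpace.toDual ℝ _).symm (fderiv ℝ f x) from rfl]
  rw [InnerProductSpace.toDual_symm_apply]
  exact this

theorem scale_invariant_norm_decay_GF {d : ℕ}
    (f : EuclideanSpace ℝ (Fin d) → ℝ) (hf : ContDiff ℝ (⊤ : ℕ∞) f)
    (A : Finset (Fin d))
    (hinv : ∀ α : ℝ, 0 < α → ∀ θ, f (α • projA A θ + projAc A θ) = f θ)
    (lam : ℝ) (hlam : 0 < lam)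
    (θ : ℝ → EuclideanSpace ℝ (Fin d))
    (hODE : ∀ t : ℝ, HasDerivAt θ (-gradient f (θ t) - lam • θ t) t) :
    (∀ t : ℝ, HasDerivAt (fun t => ‖projA A (θ t)‖ ^ 2)
        (-2 * lam * ‖projA A (θ t)‖ ^ 2) t) ∧
      ∀ t : ℝ, ‖projA A (θ t)‖ ^ 2 = ‖projA A (θ 0)‖ ^ 2 * Real.exp (-2 * lam * t) := by
  have key : ∀ t : ℝ, HasDerivAt (fun t => ‖projA A (θ t)‖ ^ 2)
      (-2 * lam * ‖projA A (θ t)‖ ^ 2) t := by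
    intro t
    set v := -gradient f (θ t) - lam • θ t with hv
    have hP : HasDerivAt (fun t => projACLM A (θ t)) (projACLM A v) t :=
      (projACLM A).hasFDerivAt.comp_hasDerivAt t (hODE t)
    have hinner : HasDerivAt (fun t => ⟪projACLM A (θ t), projACLM A (θ t)⟫)
        (⟪projACLM A (θ t), projACLM A v⟫ + ⟪projACLM A v, projACLM A (θ t)⟫) t :=
      hP.inner ℝ hP
    have hval : ⟪projACLM A (θ t), projACLM A v⟫ + ⟪projACLM A v, projACLM A (θ t)⟫
        = -2 * lam * ‖projA A (θ t)‖ ^ 2 := by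
      have h1 : ⟪projACLM A (θ t), projACLM A v⟫ = ⟪projA A (θ t), v⟫ := by
        rw [projACLM_apply, projACLM_apply, ← inner_projA]
      have h2 : ⟪projACLM A v, projACLM A (θ t)⟫ = ⟪projA A (θ t), v⟫ := by
        rw [real_inner_comm]; exact h1
      rw [h1, h2, hv, inner_sub_right, inner_neg_right, inner_smul_right,
        grad_orth f hf A hinv, inner_projA_self]
      ring
    have := hinner.congr_deriv hval
    have heq : (fun t => ⟪projACLM A (θ t), projACLM A (θ t)⟫)
        = fun t => ‖projA A (θ t)‖ ^ 2 := by
      funext s; rw [projACLM_apply, real_inner_self_eq_norm_sq]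
    rwa [heq] at this
  refine ⟨key, ?_⟩
  intro t
  set h : ℝ → ℝ := fun t => ‖projA A (θ t)‖ ^ 2 with hh
  have hconst : ∀ s : ℝ, h s * Real.exp (2 * lam * s) = h 0 * Real.exp (2 * lam * 0) := by
    have hd : ∀ s : ℝ, HasDerivAt (fun s => h s * Real.exp (2 * lam * s)) 0 s := by
      intro s
      have hlin : HasDerivAt (fun s : ℝ => 2 * lam * s) (2 * lam) s := by
        simpa using (hasDerivAt_id s).const_mul (2 * lam)
      have hexp := hlin.exp
      have := (key s).mul hexp
      exact this.congr_deriv (by simp only [hh]; ring)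
    have : ∀ s : ℝ, (fun s => h s * Real.exp (2 * lam * s)) s
        = (fun s => h s * Real.exp (2 * lam * s)) 0 :=
      fun s => is_const_of_deriv_eq_zero
        (fun u => (hd u).differentiableAt) (fun u => (hd u).deriv) s 0
    exact this
  have := hconst t
  simp only [mul_zero, Real.exp_zero, mul_one] at this
  have hne : Real.exp (2 * lam * t) ≠ 0 := Real.exp_ne_zero _
  have hfin : h t = h 0 * Real.exp (-(2 * lam * t)) := by
    rw [Real.exp_neg]
    field_simp
    linarith [this]
  rw [show -2 * lam * t = -(2 * lam * t) by ring]
  exact hfin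
end

section
/- Let f: ℝ^d → ℝ be smooth and translation-invariant on coordinate subset A, let g(θ) = ∇f(θ) + λθ, and let θ(t) solve θ'(t) = -g(θ(t)) - η·ξ₀(θ(t)) with ξ₀ = (1/2)(H+λI)g. Define θ_⊥(t) := P θ_A(t) with P = (1/d_A) 1_A 1_A^T. Then θ_⊥'(t) = -(λ + ηλ²/2)·θ_⊥(t), and hence θ_⊥(t) = θ_⊥(0)·e^{-(λ+ηλ²/2)t}. -/
/-- The indicator vector of the coordinate set `A`. -/
def indA {d : ℕ} (A : Finset (Fin d)) : EuclideanSpace ℝ (Fin d) :=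
  WithLp.toLp 2 (fun i => if i ∈ A then (1 : ℝ) else 0)

/-- The orthogonal projection onto the span of the indicator vector of `A`. -/
noncomputable def projSpanInd {d : ℕ} (A : Finset (Fin d))
    (v : EuclideanSpace ℝ (Fin d)) : EuclideanSpace ℝ (Fin d) :=
  ((A.card : ℝ)⁻¹ * (inner ℝ (indA A) v : ℝ)) • indA A

/-- The inner product with the indicator only sees the coordinates in `A`. -/
lemma inner_indA_projA {d : ℕ} (A : Finset (Fin d)) (v : EuclideanSpace ℝ (Fin d)) :
    (inner ℝ (indA A) (projA A v) : ℝ) = inner ℝ (indA A) v := by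
  simp only [PiLp.inner_apply, RCLike.inner_apply, conj_trivial, indA, projA]
  refine Finset.sum_congr rfl fun i _ => ?_
  by_cases h : i ∈ A <;> simp [h]

theorem translation_invariant_perp_decay_EoM {d : ℕ}
    (f : EuclideanSpace ℝ (Fin d) → ℝ) (hf : ContDiff ℝ (⊤ : ℕ∞) f)
    (A : Finset (Fin d)) (hA : A.Nonempty)
    (hinv : ∀ α : ℝ, ∀ θ, f (θ + α • indA A) = f θ)
    (lam η : ℝ) (hlam : 0 < lam) (hη : 0 < η)
    (g ξ₀ : EuclideanSpace ℝ (Fin d) → EuclideanSpace ℝ (Fin d))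
    (hg : ∀ x, g x = gradient f x + lam • x)
    (hξ : ∀ x, ξ₀ x = (1 / 2 : ℝ) •
      (fderiv ℝ (fun y => gradient f y) x (g x) + lam • g x))
    (θ : ℝ → EuclideanSpace ℝ (Fin d))
    (hODE : ∀ t : ℝ, HasDerivAt θ (-g (θ t) - η • ξ₀ (θ t)) t) :
    (∀ t : ℝ, HasDerivAt (fun t => projSpanInd A (projA A (θ t)))
        (-(lam + η * lam ^ 2 / 2) • projSpanInd A (projA A (θ t))) t) ∧
      ∀ t : ℝ, projSpanInd A (projA A (θ t)) =
        Real.exp (-(lam + η * lam ^ 2 / 2) * t) • projSpanInd A (projA A (θ 0)) := by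
  classical
  set u : EuclideanSpace ℝ (Fin d) := indA A with hu
  set k : ℝ := lam + η * lam ^ 2 / 2 with hk
  have hfd : Differentiable ℝ f := hf.differentiable (by simp)
  -- Step 1 : ⟨u, ∇f x⟩ = 0
  have hgrad0 : ∀ x : EuclideanSpace ℝ (Fin d), (inner ℝ u (gradient f x) : ℝ) = 0 := by
    intro x
    have h1 : HasDerivAt (fun α : ℝ => x + α • u) u 0 := by
      simpa using ((hasDerivAt_id (0 : ℝ)).smul_const u).const_add x
    have hx0 : x + (0:ℝ) • u = x := by rw [zero_smul, add_zero]
    have h2 : HasDerivAt (fun α : ℝ => f (x + α • u)) (fderiv ℝ f x u) 0 := by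
      have h2' := ((hfd (x + (0:ℝ) • u)).hasFDerivAt).comp_hasDerivAt (x := (0:ℝ)) h1
      rw [hx0] at h2'
      exact h2'
    have hconst : (fun α : ℝ => f (x + α • u)) = fun _ => f x :=
      funext fun α => hinv α x
    have h3 : fderiv ℝ f x u = 0 := by
      have h4 : HasDerivAt (fun α : ℝ => f (x + α • u)) 0 0 := by
        rw [hconst]; exact hasDerivAt_const 0 (f x)
      exact h2.unique h4
    have h5 : (inner ℝ (gradient f x) u : ℝ) = fderiv ℝ f x u := by
      have := ((hfd x).hasGradientAt).hasFDerivAt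
      rw [this.fderiv]
      simp [InnerProductSpace.toDual_apply_apply]
    rw [real_inner_comm, h5, h3]
  -- differentiability of the gradient
  have hgd : Differentiable ℝ (fun y : EuclideanSpace ℝ (Fin d) => gradient f y) := by
    have h1 : Differentiable ℝ (fderiv ℝ f) :=
      (hf.fderiv_right (m := (⊤ : ℕ∞)) (by simp)).differentiable (by simp)
    have : (fun y : EuclideanSpace ℝ (Fin d) => gradient f y)
        = fun y => (InnerProductSpace.toDual ℝ (EuclideanSpace ℝ (Fin d))).symm (fderiv ℝ f y) := rfl
    rw [this]
    exact (InnerProductSpace.toDual ℝ (EuclideanSpace ℝ (Fin d))).symm.toContinuousLinearEquiv.differentiable.comp h1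
  -- Step 2 : ⟨u, H x v⟩ = 0
  have hHess : ∀ (x v : EuclideanSpace ℝ (Fin d)), (inner ℝ u (fderiv ℝ (fun y => gradient f y) x v) : ℝ) = 0 := by
    intro x v
    have h1 : HasFDerivAt (fun y : EuclideanSpace ℝ (Fin d) => (inner ℝ u (gradient f y) : ℝ))
        ((innerSL ℝ u).comp (fderiv ℝ (fun y => gradient f y) x)) x := by
      exact ((innerSL ℝ u).hasFDerivAt).comp x (hgd x).hasFDerivAt
    have h2 : HasFDerivAt (fun y : EuclideanSpace ℝ (Fin d) => (inner ℝ u (gradient f y) : ℝ))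
        (0 : EuclideanSpace ℝ (Fin d) →L[ℝ] ℝ) x := by
      have : (fun y : EuclideanSpace ℝ (Fin d) => (inner ℝ u (gradient f y) : ℝ)) = fun _ => 0 :=
        funext fun y => hgrad0 y
      rw [this]; exact hasFDerivAt_const (0:ℝ) x
    have h3 := h1.unique h2
    have := congrArg (fun (L : EuclideanSpace ℝ (Fin d) →L[ℝ] ℝ) => L v) h3
    simpa using this
  -- inner products with g, ξ₀
  have hinner_g : ∀ x : EuclideanSpace ℝ (Fin d), (inner ℝ u (g x) : ℝ) = lam * inner ℝ u x := by
    intro x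
    rw [hg x]
    simp [inner_add_right, inner_smul_right, hgrad0]
  have hinner_ξ : ∀ x : EuclideanSpace ℝ (Fin d), (inner ℝ u (ξ₀ x) : ℝ) = lam ^ 2 / 2 * inner ℝ u x := by
    intro x
    rw [hξ x]
    rw [inner_smul_right, inner_add_right, inner_smul_right, hHess, hinner_g]
    ring
  have hinner_rhs : ∀ x : EuclideanSpace ℝ (Fin d),
      (inner ℝ u (-g x - η • ξ₀ x) : ℝ) = -k * inner ℝ u x := by
    intro x
    rw [inner_sub_right, inner_neg_right, inner_smul_right, hinner_g, hinner_ξ, hk]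
    ring
  -- the scalar coefficient
  set c : ℝ → ℝ := fun t => (A.card : ℝ)⁻¹ * (inner ℝ u (θ t) : ℝ) with hc
  have hproj : ∀ t, projSpanInd A (projA A (θ t)) = c t • u := by
    intro t
    rw [projSpanInd, inner_indA_projA]
  have hcderiv : ∀ t, HasDerivAt c (-k * c t) t := by
    intro t
    have h1 : HasDerivAt (fun t => (inner ℝ u (θ t) : ℝ))
        (inner ℝ u (-g (θ t) - η • ξ₀ (θ t)) : ℝ) t := by
      have := (innerSL ℝ u).hasFDerivAt.comp_hasDerivAt t (hODE t)
      exact this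
    rw [hinner_rhs] at h1
    have := h1.const_mul ((A.card : ℝ)⁻¹)
    simpa [hc, mul_comm, mul_assoc, mul_left_comm] using this
  constructor
  · intro t
    have := (hcderiv t).smul_const u
    simp only [hproj]
    have h2 : (-k * c t) • u = -k • (c t • u) := by rw [smul_smul]
    rw [h2] at this
    exact this
  · -- solve the scalar ODE
    have key : ∀ t, c t = Real.exp (-k * t) * c 0 := by
      intro t
      set w : ℝ → ℝ := fun t => Real.exp (k * t) * c t with hw
      have hwderiv : ∀ s, HasDerivAt w 0 s := by
        intro s
        have he : HasDerivAt (fun t : ℝ => Real.exp (k * t)) (k * Real.exp (k * s)) s := by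
          have := ((hasDerivAt_id s).const_mul k).exp
          simpa [mul_comm] using this
        have h2 := he.mul (hcderiv s)
        have h0 : k * Real.exp (k * s) * c s + Real.exp (k * s) * (-k * c s) = 0 := by
          ring
        rw [h0] at h2
        exact h2
      have hwc : w t = w 0 := by
        have : ∀ s, deriv w s = 0 := fun s => (hwderiv s).deriv
        have hdiff : Differentiable ℝ w := fun s => (hwderiv s).differentiableAt
        have := is_const_of_deriv_eq_zero hdiff this t 0
        exact this
      have hexp : Real.exp (k * t) ≠ 0 := Real.exp_ne_zero _
      have : Real.exp (k * t) * c t = Real.exp (k * 0) * c 0 := hwc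
      rw [mul_zero, Real.exp_zero, one_mul] at this
      field_simp [Real.exp_neg, neg_mul] at *
      rw [← this]; simp only [neg_mul, Real.exp_neg]; field_simp
    intro t
    rw [hproj, hproj, key t, smul_smul]
end
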